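/- Let T be a bounded time scale with σ ∇-differentiable on T_κ, let h : T → ℝⁿ be rd-continuous, let G(t) = ∫_a^t h(τ)Δτ, and let f : T^κ → ℝⁿ. If f(t) = G(σ(t)) + c for all t ∈ T^κ for some constant c ∈ ℝⁿ, then f is ∇-differentiable on T^κ_κ with f^∇(t) = σ^∇(t) h(t) for every t ∈ T^κ_κ. -/

import Mathlib

open Set Filter Topology RealInnerProductSpace

open Classical in
/-- Forward jump operator of a time scale `T`, with convention `inf ∅ = sSup T`. -/
noncomputable def tsSigma (T : Set ℝ) (t : ℝ) : ℝ :=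
  if ({s | s ∈ T ∧ t < s}).Nonempty then sInf {s | s ∈ T ∧ t < s} else sSup T

open Classical in
/-- Backward jump operator of a time scale `T`, with convention `sup ∅ = sInf T`. -/
noncomputable def tsRho (T : Set ℝ) (t : ℝ) : ℝ :=
  if ({s | s ∈ T ∧ s < t}).Nonempty then sSup {s | s ∈ T ∧ s < t} else sInf T

/-- `u` is Δ-differentiable at `t` (w.r.t. the time scale `T`) with derivative `L`. -/
def HasDeltaDerivAt {E : Type*} [NormedAddCommGroup E] [NormedSpace ℝ E]
    (T : Set ℝ) (u : ℝ → E) (t : ℝ) (L : E) : Prop :=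
  Filter.Tendsto (fun s => (tsSigma T t - s)⁻¹ • (u (tsSigma T t) - u s))
    (nhdsWithin t (T \ {tsSigma T t})) (nhds L)

/-- `u` is ∇-differentiable at `t` (w.r.t. the time scale `T`) with derivative `L`. -/
def HasNablaDerivAt {E : Type*} [NormedAddCommGroup E] [NormedSpace ℝ E]
    (T : Set ℝ) (u : ℝ → E) (t : ℝ) (L : E) : Prop :=
  Filter.Tendsto (fun s => (s - tsRho T t)⁻¹ • (u s - u (tsRho T t)))
    (nhdsWithin t (T \ {tsRho T t})) (nhds L)

/-- `T^κ = {t ∈ T : t ≤ ρ(max T)}`. -/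
def Tup (T : Set ℝ) : Set ℝ := {t | t ∈ T ∧ t ≤ tsRho T (sSup T)}

/-- `T_κ = {t ∈ T : σ(min T) ≤ t}`. -/
def Tlow (T : Set ℝ) : Set ℝ := {t | t ∈ T ∧ tsSigma T (sInf T) ≤ t}

section Aux
variable {T : Set ℝ}

lemma ts_value_of_tendsto {E : Type*} [TopologicalSpace E] [T2Space E] {S : Set ℝ}
    {g : ℝ → E} {t : ℝ} {L : E} (ht : t ∈ S)
    (hh : Filter.Tendsto g (nhdsWithin t S) (nhds L)) : g t = L := by
  have hp : pure t ≤ nhdsWithin t S :=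
    le_inf (pure_le_nhds t) (Filter.le_principal_iff.2 (Filter.mem_pure.2 ht))
  exact (tendsto_nhds_unique (hh.mono_left hp) (tendsto_pure_nhds g t)).symm

lemma tsSigma_mem (hne : T.Nonempty) (hbd : Bornology.IsBounded T) (hcl : IsClosed T) (t : ℝ) :
    tsSigma T t ∈ T := by
  unfold tsSigma
  split_ifs with hh
  · have hsub : {s | s ∈ T ∧ t < s} ⊆ T := fun s hs => hs.1
    have h1 : sInf {s | s ∈ T ∧ t < s} ∈ closure {s | s ∈ T ∧ t < s} :=
      csInf_mem_closure hh (hbd.bddBelow.mono hsub)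
    have h2 := closure_mono hsub h1
    rwa [hcl.closure_eq] at h2
  · exact hcl.csSup_mem hne hbd.bddAbove

lemma tsRho_mem (hne : T.Nonempty) (hbd : Bornology.IsBounded T) (hcl : IsClosed T) (t : ℝ) :
    tsRho T t ∈ T := by
  unfold tsRho
  split_ifs with hh
  · have hsub : {s | s ∈ T ∧ s < t} ⊆ T := fun s hs => hs.1
    have h1 : sSup {s | s ∈ T ∧ s < t} ∈ closure {s | s ∈ T ∧ s < t} :=
      csSup_mem_closure hh (hbd.bddAbove.mono hsub)
    have h2 := closure_mono hsub h1
    rwa [hcl.closure_eq] at h2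
  · exact hcl.csInf_mem hne hbd.bddBelow

lemma le_tsSigma (hbd : Bornology.IsBounded T) {t : ℝ} (ht : t ∈ T) : t ≤ tsSigma T t := by
  unfold tsSigma
  split_ifs with hh
  · exact le_csInf hh fun s hs => hs.2.le
  · exact le_csSup hbd.bddAbove ht

lemma tsSigma_le (hbd : Bornology.IsBounded T) {t u : ℝ} (hu : u ∈ T) (htu : t < u) :
    tsSigma T t ≤ u := by
  unfold tsSigma
  rw [if_pos ⟨u, hu, htu⟩]
  exact csInf_le (hbd.bddBelow.mono fun s hs => hs.1) ⟨hu, htu⟩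

lemma tsRho_le (hbd : Bornology.IsBounded T) {t : ℝ} (ht : t ∈ T) : tsRho T t ≤ t := by
  unfold tsRho
  split_ifs with hh
  · exact csSup_le hh fun s hs => hs.2.le
  · exact csInf_le hbd.bddBelow ht

lemma le_tsRho (hbd : Bornology.IsBounded T) {t u : ℝ} (hu : u ∈ T) (hut : u < t) :
    u ≤ tsRho T t := by
  unfold tsRho
  rw [if_pos ⟨u, hu, hut⟩]
  exact le_csSup (hbd.bddAbove.mono fun s hs => hs.1) ⟨hu, hut⟩

lemma tsSigma_tsRho (hbd : Bornology.IsBounded T) {t : ℝ}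
    (ht : t ∈ T) (hh : tsRho T t < t) : tsSigma T (tsRho T t) = t := by
  refine le_antisymm (tsSigma_le hbd ht hh) ?_
  unfold tsSigma
  rw [if_pos ⟨t, ht, hh⟩]
  refine le_csInf ⟨t, ht, hh⟩ ?_
  rintro s ⟨hsT, hs⟩
  by_contra hlt
  push_neg at hlt
  exact absurd (le_tsRho hbd hsT hlt) (not_le.2 hs)

lemma exists_between_of_rho_eq (hbd : Bornology.IsBounded T) {t s : ℝ}
    (hρ : tsRho T t = t) (hsT : s ∈ T) (hst : s < t) : ∃ u, u ∈ T ∧ s < u ∧ u < t := by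
  have hlow : {x | x ∈ T ∧ x < t}.Nonempty := ⟨s, hsT, hst⟩
  have heq : tsRho T t = sSup {x | x ∈ T ∧ x < t} := by
    unfold tsRho; rw [if_pos hlow]
  have hsup : sSup {x | x ∈ T ∧ x < t} = t := by rw [← heq]; exact hρ
  obtain ⟨u, hu, hsu⟩ := exists_lt_of_lt_csSup hlow (hsup ▸ hst)
  exact ⟨u, hu.1, hsu, hu.2⟩

lemma neBot_left (hbd : Bornology.IsBounded T) {t : ℝ} (hρ : tsRho T t = t)
    (hlow : {x | x ∈ T ∧ x < t}.Nonempty) :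
    (nhdsWithin t {x | x ∈ T ∧ x < t}).NeBot := by
  rw [← mem_closure_iff_nhdsWithin_neBot]
  have heq : tsRho T t = sSup {x | x ∈ T ∧ x < t} := by
    unfold tsRho; rw [if_pos hlow]
  have hsup : sSup {x | x ∈ T ∧ x < t} = t := by rw [← heq]; exact hρ
  have h2 := csSup_mem_closure hlow (hbd.bddAbove.mono (fun x hx => hx.1 : {x | x ∈ T ∧ x < t} ⊆ T))
  rwa [hsup] at h2

end Aux


/-- if `σ` is ∇-differentiable on `T_κ` (with derivative `sd`), `h` is
rd-continuous, `G` is the Cauchy Δ-antiderivative of `h` vanishing at `a = min T`, and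
`f(t) = G(σ(t)) + c` on `T^κ`, then `f` is ∇-differentiable on `T^κ_κ` with
`f^∇(t) = σ^∇(t) • h(t)`. -/
theorem stmt_17 (T : Set ℝ) (hne : T.Nonempty) (hbd : Bornology.IsBounded T) (hcl : IsClosed T)
    (hcard : ∃ x ∈ T, ∃ y ∈ T, ∃ z ∈ T, x ≠ y ∧ x ≠ z ∧ y ≠ z)
    (n : ℕ) (h G f : ℝ → EuclideanSpace ℝ (Fin n)) (sd : ℝ → ℝ)
    (c : EuclideanSpace ℝ (Fin n))
    (hσ : ∀ t ∈ Tlow T, HasNablaDerivAt T (tsSigma T) t (sd t))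
    (hh_rd : ∀ t ∈ Tup T, tsSigma T t = t → ContinuousWithinAt h T t)
    (hh_ld : ∀ t ∈ Tup T, tsRho T t = t →
      ∃ l : EuclideanSpace ℝ (Fin n), Filter.Tendsto h (nhdsWithin t (T ∩ Set.Iio t)) (nhds l))
    (hGa : G (sInf T) = 0)
    (hG : ∀ t ∈ Tup T, HasDeltaDerivAt T G t (h t))
    (hf : ∀ t ∈ Tup T, f t = G (tsSigma T t) + c) :
    ∀ t ∈ Tup T ∩ Tlow T, HasNablaDerivAt T f t (sd t • h t) := by
  rintro t ⟨⟨htT, htb⟩, htl⟩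
  have hBA := hbd.bddAbove
  have hrT : tsRho T t ∈ T := tsRho_mem hne hbd hcl t
  have hrt : tsRho T t ≤ t := tsRho_le hbd htT
  have hstT : tsSigma T t ∈ T := tsSigma_mem hne hbd hcl t
  have htst : t ≤ tsSigma T t := le_tsSigma hbd htT
  show Filter.Tendsto (fun s => (s - tsRho T t)⁻¹ • (f s - f (tsRho T t)))
    (nhdsWithin t (T \ {tsRho T t})) (nhds (sd t • h t))
  have hσt : Filter.Tendsto (fun s => (s - tsRho T t)⁻¹ • (tsSigma T s - tsSigma T (tsRho T t)))
      (nhdsWithin t (T \ {tsRho T t})) (nhds (sd t)) := hσ t htl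
  have hGt : Filter.Tendsto (fun s => (tsSigma T t - s)⁻¹ • (G (tsSigma T t) - G s))
      (nhdsWithin t (T \ {tsSigma T t})) (nhds (h t)) := hG t ⟨htT, htb⟩
  -- claim about the limit of σ along the filter
  have hσclaim : tsSigma T (tsRho T t) + (t - tsRho T t) * sd t = tsSigma T t := by
    rcases eq_or_lt_of_le hrt with he | hlt
    · rw [he]; ring
    · have hσr : tsSigma T (tsRho T t) = t := tsSigma_tsRho hbd htT hlt
      have htmem : t ∈ T \ ({tsRho T t} : Set ℝ) := ⟨htT, by simpa using hlt.ne'⟩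
      have hval := ts_value_of_tendsto htmem hσt
      rw [hσr, smul_eq_mul] at hval
      rw [hσr, ← hval]
      have h0 : t - tsRho T t ≠ 0 := sub_ne_zero.2 hlt.ne'
      field_simp
      ring
  -- continuity of σ along the filter
  have hσcont : Filter.Tendsto (tsSigma T) (nhdsWithin t (T \ {tsRho T t}))
      (nhds (tsSigma T t)) := by
    have h1 : Filter.Tendsto (fun s => tsSigma T (tsRho T t)
          + (s - tsRho T t) * ((s - tsRho T t)⁻¹ • (tsSigma T s - tsSigma T (tsRho T t))))
        (nhdsWithin t (T \ {tsRho T t}))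
        (nhds (tsSigma T (tsRho T t) + (t - tsRho T t) * sd t)) :=
      tendsto_const_nhds.add
        ((((tendsto_id.sub tendsto_const_nhds).mono_left nhdsWithin_le_nhds)).mul hσt)
    rw [hσclaim] at h1
    refine h1.congr' ?_
    filter_upwards [self_mem_nhdsWithin] with s hs
    have hsne : s - tsRho T t ≠ 0 := sub_ne_zero.2 (by simpa using hs.2)
    rw [smul_eq_mul]
    field_simp
    ring
  -- reduction to G ∘ σ
  have hrb : tsRho T t ∈ Tup T := ⟨hrT, le_trans hrt htb⟩
  have hevU : ∀ᶠ s in nhdsWithin t (T \ {tsRho T t}), s ∈ Tup T := by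
    rcases eq_or_lt_of_le (tsRho_le hbd (hcl.csSup_mem hne hBA)) with he | hlt
    · filter_upwards [self_mem_nhdsWithin] with s hs
      exact ⟨hs.1, by rw [he]; exact le_csSup hBA hs.1⟩
    · have hmem : Set.Iio (sSup T) ∈ nhds t := Iio_mem_nhds (lt_of_le_of_lt htb hlt)
      filter_upwards [self_mem_nhdsWithin, mem_nhdsWithin_of_mem_nhds hmem] with s hs hs'
      exact ⟨hs.1, le_tsRho hbd hs.1 hs'⟩
  have hred : ∀ᶠ s in nhdsWithin t (T \ {tsRho T t}),
      (s - tsRho T t)⁻¹ • (G (tsSigma T s) - G (tsSigma T (tsRho T t)))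
        = (s - tsRho T t)⁻¹ • (f s - f (tsRho T t)) := by
    filter_upwards [hevU] with s hs
    rw [hf s hs, hf (tsRho T t) hrb]
    congr 1
    abel
  suffices hmain : Filter.Tendsto
      (fun s => (s - tsRho T t)⁻¹ • (G (tsSigma T s) - G (tsSigma T (tsRho T t))))
      (nhdsWithin t (T \ {tsRho T t})) (nhds (sd t • h t)) by
    exact hmain.congr' hred
  rcases eq_or_lt_of_le hrt with hr_eq | hr_lt
  · -- left-dense case : ρ t = t
    rw [hr_eq] at hσt hσcont ⊢
    -- first show σ t = t
    have hst_eq : tsSigma T t = t := by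
      by_contra hne'
      have hst_gt : t < tsSigma T t := htst.lt_of_ne (Ne.symm hne')
      rcases Set.eq_empty_or_nonempty {x | x ∈ T ∧ x < t} with hemp | hlow
      · have hinf : tsRho T t = sInf T := by
          unfold tsRho; rw [if_neg]; rw [hemp]; exact Set.not_nonempty_empty
        have h5 : sInf T = t := by rw [← hinf]; exact hr_eq
        have htl2 : tsSigma T (sInf T) ≤ t := htl.2
        rw [h5] at htl2
        exact absurd htl2 (not_le.2 hst_gt)
      · haveI := neBot_left hbd hr_eq hlow
        have hmono : nhdsWithin t {x | x ∈ T ∧ x < t} ≤ nhdsWithin t (T \ {t}) := by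
          refine nhdsWithin_mono t ?_
          rintro x ⟨hxT, hxt⟩
          exact ⟨hxT, by simpa using ne_of_lt hxt⟩
        have h2 := hσcont.mono_left hmono
        have h3 : tsSigma T t ≤ t := le_of_tendsto h2 (by
          filter_upwards [self_mem_nhdsWithin] with x hx
          exact tsSigma_le hbd htT hx.2)
        exact absurd h3 (not_le.2 hst_gt)
    have hσne : ∀ x ∈ T \ ({t} : Set ℝ), tsSigma T x ≠ tsSigma T t := by
      rintro x ⟨hxT, hxr⟩
      have hxt : x ≠ t := by simpa using hxr
      rw [hst_eq]
      rcases hxt.lt_or_gt with hlt | hgt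
      · obtain ⟨u, huT, hxu, hut⟩ := exists_between_of_rho_eq hbd hr_eq hxT hlt
        exact ne_of_lt (lt_of_le_of_lt (tsSigma_le hbd huT hxu) hut)
      · exact ne_of_gt (lt_of_lt_of_le hgt (le_tsSigma hbd hxT))
    have hσto : Filter.Tendsto (tsSigma T) (nhdsWithin t (T \ {t}))
        (nhdsWithin t (T \ {tsSigma T t})) := by
      rw [tendsto_nhdsWithin_iff]
      constructor
      · rwa [hst_eq] at hσcont
      · filter_upwards [self_mem_nhdsWithin] with x hx
        exact ⟨tsSigma_mem hne hbd hcl x, by simpa using hσne x hx⟩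
    have hsecond : Filter.Tendsto
        (fun x => (tsSigma T x - tsSigma T t)⁻¹ • (G (tsSigma T x) - G (tsSigma T t)))
        (nhdsWithin t (T \ {t})) (nhds (h t)) := by
      have h4 : Filter.Tendsto (fun u => (u - tsSigma T t)⁻¹ • (G u - G (tsSigma T t)))
          (nhdsWithin t (T \ {tsSigma T t})) (nhds (h t)) := by
        refine hGt.congr fun u => ?_
        rw [← neg_sub u (tsSigma T t), ← neg_sub (G u) (G (tsSigma T t)), inv_neg, neg_smul_neg]
      exact h4.comp hσto
    refine ((hσt.smul hsecond).congr' ?_)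
    filter_upwards [self_mem_nhdsWithin] with x hx
    have hne2 : tsSigma T x - tsSigma T t ≠ 0 := sub_ne_zero.2 (hσne x hx)
    show ((x - t)⁻¹ • (tsSigma T x - tsSigma T t))
        • ((tsSigma T x - tsSigma T t)⁻¹ • (G (tsSigma T x) - G (tsSigma T t)))
      = (x - t)⁻¹ • (G (tsSigma T x) - G (tsSigma T t))
    rw [smul_eq_mul, smul_smul, mul_assoc, mul_inv_cancel₀ hne2, mul_one]
  · -- left-scattered case : ρ t < t
    have htmem : t ∈ T \ ({tsRho T t} : Set ℝ) := ⟨htT, by simpa using hr_lt.ne'⟩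
    have hσr : tsSigma T (tsRho T t) = t := tsSigma_tsRho hbd htT hr_lt
    have htr0 : t - tsRho T t ≠ 0 := sub_ne_zero.2 hr_lt.ne'
    have hsd : sd t = (t - tsRho T t)⁻¹ * (tsSigma T t - t) := by
      have hval := ts_value_of_tendsto htmem hσt
      rw [hσr, smul_eq_mul] at hval
      rw [← hval]
    rw [hσr]
    rcases eq_or_lt_of_le htst with hst_eq | hst_gt
    · -- right-dense : σ t = t
      have hsd0 : sd t = 0 := by rw [hsd, ← hst_eq, sub_self, mul_zero]
      rw [hsd0, zero_smul]
      rw [← hst_eq] at hGt hσcont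
      have hGc : Filter.Tendsto G (nhdsWithin t T) (nhds (G t)) := by
        have h4 : Filter.Tendsto (fun u => G t - (t - u) • ((t - u)⁻¹ • (G t - G u)))
            (nhdsWithin t (T \ {t})) (nhds (G t - (0:ℝ) • h t)) := by
          have hz : Filter.Tendsto (fun u : ℝ => t - u) (nhdsWithin t (T \ {t})) (nhds 0) := by
            have hz1 : Filter.Tendsto (fun u : ℝ => t - u) (nhds t) (nhds (t - t)) :=
              tendsto_const_nhds.sub tendsto_id
            rw [sub_self] at hz1
            exact hz1.mono_left nhdsWithin_le_nhds
          exact tendsto_const_nhds.sub (Filter.Tendsto.smul hz hGt)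
        have h5 : Filter.Tendsto G (nhdsWithin t (T \ {t})) (nhds (G t)) := by
          have hev : ∀ᶠ u in nhdsWithin t (T \ {t}),
              G t - (t - u) • ((t - u)⁻¹ • (G t - G u)) = G u := by
            filter_upwards [self_mem_nhdsWithin] with u hu
            have h0 : t - u ≠ 0 := sub_ne_zero.2 (Ne.symm (by simpa using hu.2))
            rw [smul_smul, mul_inv_cancel₀ h0, one_smul, sub_sub_cancel]
          have h6 := h4.congr' hev
          simpa using h6
        exact continuousWithinAt_diff_self.1 h5
      have hσto2 : Filter.Tendsto (tsSigma T) (nhdsWithin t (T \ {tsRho T t}))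
          (nhdsWithin t T) := by
        rw [tendsto_nhdsWithin_iff]
        refine ⟨hσcont, ?_⟩
        filter_upwards [self_mem_nhdsWithin] with x hx
        exact tsSigma_mem hne hbd hcl x
      have hq1 : Filter.Tendsto (fun s => (s - tsRho T t)⁻¹)
          (nhdsWithin t (T \ {tsRho T t})) (nhds ((t - tsRho T t)⁻¹)) :=
        ((tendsto_id.sub tendsto_const_nhds).inv₀ htr0).mono_left nhdsWithin_le_nhds
      have hq2 : Filter.Tendsto (fun s => G (tsSigma T s) - G t)
          (nhdsWithin t (T \ {tsRho T t})) (nhds 0) := by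
        have := (hGc.comp hσto2).sub (tendsto_const_nhds (x := G t))
        simpa using this
      have h7 := hq1.smul hq2
      rw [smul_zero] at h7
      exact h7
    · -- right-scattered : σ t > t
      have hht : h t = (tsSigma T t - t)⁻¹ • (G (tsSigma T t) - G t) := by
        have hm : t ∈ T \ ({tsSigma T t} : Set ℝ) := ⟨htT, by simpa using (ne_of_lt hst_gt)⟩
        have hval := ts_value_of_tendsto hm hGt
        rw [← hval]
      have hIoo : Set.Ioo (tsRho T t) (tsSigma T t) ∈ nhds t := Ioo_mem_nhds hr_lt hst_gt
      have hsingle : Set.Ioo (tsRho T t) (tsSigma T t) ∩ (T \ {tsRho T t}) ⊆ {t} := by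
        rintro x ⟨⟨hx1, hx2⟩, hxT, -⟩
        by_contra hxne
        have hxt : x ≠ t := by simpa using hxne
        rcases hxt.lt_or_gt with h1 | h1
        · exact absurd (le_tsRho hbd hxT h1) (not_le.2 hx1)
        · exact absurd (tsSigma_le hbd hxT h1) (not_le.2 hx2)
      have hFle : nhdsWithin t (T \ {tsRho T t}) ≤ pure t := by
        rw [← Filter.principal_singleton, Filter.le_principal_iff]
        exact Filter.mem_of_superset
          (Filter.inter_mem (mem_nhdsWithin_of_mem_nhds hIoo) self_mem_nhdsWithin) hsingle
      have hval : ((t : ℝ) - tsRho T t)⁻¹ • (G (tsSigma T t) - G t) = sd t • h t := by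
        rw [hht, hsd, smul_smul, mul_assoc, mul_inv_cancel₀ (sub_ne_zero.2 (ne_of_gt hst_gt)),
          mul_one]
      have h6 : Filter.Tendsto (fun s => (s - tsRho T t)⁻¹ • (G (tsSigma T s) - G t))
          (pure t) (nhds (sd t • h t)) := by
        rw [← hval]
        have h8 := tendsto_pure_nhds
          (fun s => (s - tsRho T t)⁻¹ • (G (tsSigma T s) - G t)) t
        exact h8
      exact h6.mono_left hFle
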